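/- arXiv:1305.0407 — 5 statements merged into one kernel-verified Lean document; each statement's English description precedes it below -/
import Mathlib

section
/- Let K ⊆ L be fields of characteristic 2 with L² ⊆ K, and let m ≥ 2 be an even integer. Suppose λ₁, …, λ_m ∈ Lˣ satisfy λ₁²λ₂⁻¹ ∈ K, λ_{i−1}⁻¹λ_i²λ_{i+1}⁻¹ ∈ K for all 2 ≤ i ≤ m−1, and λ_{m−1}⁻¹λ_m² ∈ K. Then λ_i ∈ K for all i. -/
private lemma key3 {L : Type*} [Field L] (K : Subfield L) {a b : L}
    (ha : a ∈ K) (ha0 : a ≠ 0) (hab : a * b ∈ K) : b ∈ K := by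
  have := K.mul_mem (K.inv_mem ha) hab
  rwa [inv_mul_cancel_left₀ ha0 b] at this

/-- Let `K ⊆ L` be fields of characteristic 2 with `L² ⊆ K`, and let `m ≥ 2` be even.
If `λ₁, …, λ_m ∈ Lˣ` satisfy `λ₁²λ₂⁻¹ ∈ K`, `λ_{i−1}⁻¹λ_i²λ_{i+1}⁻¹ ∈ K` for
`2 ≤ i ≤ m−1`, and `λ_{m−1}⁻¹λ_m² ∈ K`, then all `λ_i ∈ K`. -/
theorem stmt3 {L : Type*} [Field L] [CharP L 2] (K : Subfield L)
    (hsq : ∀ x : L, x ^ 2 ∈ K) (m : ℕ) (hm2 : 2 ≤ m) (hmeven : Even m)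
    (lam : ℕ → L) (hne : ∀ i, 1 ≤ i → i ≤ m → lam i ≠ 0)
    (hfirst : lam 1 ^ 2 * (lam 2)⁻¹ ∈ K)
    (hmid : ∀ i, 2 ≤ i → i ≤ m - 1 → (lam (i - 1))⁻¹ * lam i ^ 2 * (lam (i + 1))⁻¹ ∈ K)
    (hlast : (lam (m - 1))⁻¹ * lam m ^ 2 ∈ K) :
    ∀ i, 1 ≤ i → i ≤ m → lam i ∈ K := by
  have h1ne : lam 1 ≠ 0 := hne 1 le_rfl (by omega)
  have hmne : lam m ≠ 0 := hne m (by omega) le_rfl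
  -- lam 2 ∈ K
  have h2 : lam 2 ∈ K := by
    have h := key3 K (hsq (lam 1)) (pow_ne_zero 2 h1ne) hfirst
    simpa using K.inv_mem h
  -- lam (m-1) ∈ K
  have hm1 : lam (m - 1) ∈ K := by
    have h := key3 K (hsq (lam m)) (pow_ne_zero 2 hmne)
      (by rwa [mul_comm] at hlast)
    simpa using K.inv_mem h
  -- products with gap 2
  have hpair : ∀ i, 1 ≤ i → i ≤ m - 2 → lam i * lam (i + 2) ∈ K := by
    intro i hi1 hi2
    have h := hmid (i + 1) (by omega) (by omega)
    simp only [Nat.add_sub_cancel] at h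
    have heq : (lam i)⁻¹ * lam (i + 1) ^ 2 * (lam (i + 1 + 1))⁻¹
        = lam (i + 1) ^ 2 * (lam i * lam (i + 1 + 1))⁻¹ := by
      rw [mul_inv]; ring
    rw [heq] at h
    have h2' := key3 K (hsq (lam (i + 1))) (pow_ne_zero 2 (hne (i + 1) (by omega) (by omega))) h
    have := K.inv_mem h2'
    rw [inv_inv] at this
    simpa [show i + 1 + 1 = i + 2 by ring] using this
  -- even indices
  have heven : ∀ k, 2 + 2 * k ≤ m → lam (2 + 2 * k) ∈ K := by
    intro k
    induction k with
    | zero => intro _; simpa using h2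
    | succ k ih =>
      intro hk
      have ihk : lam (2 + 2 * k) ∈ K := ih (by omega)
      have hp := hpair (2 + 2 * k) (by omega) (by omega)
      have := key3 K ihk (hne (2 + 2 * k) (by omega) (by omega)) hp
      have heq : 2 + 2 * (k + 1) = 2 + 2 * k + 2 := by ring
      rwa [heq]
  -- odd indices, descending from m - 1
  have hodd : ∀ k, 2 * k ≤ m - 2 → lam (m - 1 - 2 * k) ∈ K := by
    intro k
    induction k with
    | zero => intro _; simpa using hm1
    | succ k ih =>
      intro hk
      have ihk : lam (m - 1 - 2 * k) ∈ K := ih (by omega)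
      have hp := hpair (m - 1 - 2 * (k + 1)) (by omega) (by omega)
      have heq : m - 1 - 2 * (k + 1) + 2 = m - 1 - 2 * k := by omega
      rw [heq] at hp
      rw [mul_comm] at hp
      exact key3 K ihk (hne (m - 1 - 2 * k) (by omega) (by omega)) hp
  intro i hi1 him
  rcases Nat.even_or_odd i with ⟨c, hc⟩ | ⟨c, hc⟩
  · have heq : i = 2 + 2 * (c - 1) := by omega
    rw [heq]; exact heven (c - 1) (by omega)
  · obtain ⟨d, hd⟩ := hmeven
    have heq : i = m - 1 - 2 * ((m - 1 - i) / 2) := by omega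
    rw [heq]; exact hodd _ (by omega)
end

section
/- Let K ⊆ L be fields of characteristic 2 with L² ⊆ K and K ≠ L. Then there exist λ₁, λ₂, λ₃ ∈ Lˣ with λ₁²λ₂⁻¹ ∈ K, λ₁⁻¹λ₂²λ₃⁻¹ ∈ K, and λ₂⁻¹λ₃² ∈ K, but λ₁ ∉ K. -/
/- Take `a ∉ K` and `λ₁ = λ₃ = a`, `λ₂ = a²`: the outer two expressions equal `1` and the middle
one equals `a²`, which lies in `K`. -/
theorem stmt4_general {L : Type*} [Field L] (K : Subfield L)
    (hsq : ∀ x : L, x ^ 2 ∈ K) (hKL : K ≠ ⊤) :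
    ∃ l1 l2 l3 : L, l1 ≠ 0 ∧ l2 ≠ 0 ∧ l3 ≠ 0 ∧
      l1 ^ 2 * l2⁻¹ ∈ K ∧ l1⁻¹ * l2 ^ 2 * l3⁻¹ ∈ K ∧ l2⁻¹ * l3 ^ 2 ∈ K ∧ l1 ∉ K := by
  obtain ⟨a, ha⟩ := SetLike.exists_not_mem_of_ne_top K hKL
  have ha0 : a ≠ 0 := fun h => ha (h ▸ K.zero_mem)
  have ha2 : a ^ 2 ≠ 0 := pow_ne_zero 2 ha0
  have hmid : a⁻¹ * (a ^ 2) ^ 2 * a⁻¹ = a ^ 2 := by field_simp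
  refine ⟨a, a ^ 2, a, ha0, ha2, ha0, ?_, ?_, ?_, ha⟩
  · rw [mul_inv_cancel₀ ha2]; exact K.one_mem
  · rw [hmid]; exact hsq a
  · rw [inv_mul_cancel₀ ha2]; exact K.one_mem

/-- Let `K ⊆ L` be fields of characteristic 2 with `L² ⊆ K` and `K ≠ L`.  Then there
exist `λ₁, λ₂, λ₃ ∈ Lˣ` with `λ₁²λ₂⁻¹ ∈ K`, `λ₁⁻¹λ₂²λ₃⁻¹ ∈ K` and `λ₂⁻¹λ₃² ∈ K`,
but `λ₁ ∉ K`. -/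
theorem stmt4 {L : Type*} [Field L] [CharP L 2] (K : Subfield L)
    (hsq : ∀ x : L, x ^ 2 ∈ K) (hKL : K ≠ ⊤) :
    ∃ l1 l2 l3 : L, l1 ≠ 0 ∧ l2 ≠ 0 ∧ l3 ≠ 0 ∧
      l1 ^ 2 * l2⁻¹ ∈ K ∧ l1⁻¹ * l2 ^ 2 * l3⁻¹ ∈ K ∧ l2⁻¹ * l3 ^ 2 ∈ K ∧ l1 ∉ K :=
  stmt4_general K hsq hKL
end

section
/- Let k ⊆ ℓ be fields of characteristic 2 with ℓ² ⊆ k. Let δ ∈ k be such that the polynomial X² + X + δ is irreducible over k, and let γ be a root of X² + X + δ in an extension of ℓ. Set K = k(γ) and L = ℓ(γ). Then L² ⊆ K ⊆ L, and [K:k] = [L:ℓ] = 2. -/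
open Polynomial IntermediateField

/-- Let `k ⊆ ℓ` be fields of characteristic 2 with `ℓ² ⊆ k`.  Let `δ ∈ k` be such that
`X² + X + δ` is irreducible over `k`, and let `γ` be a root of `X² + X + δ` in an
extension of `ℓ`.  Set `K = k(γ)` and `L = ℓ(γ)`.  Then `L² ⊆ K ⊆ L` and
`[K : k] = [L : ℓ] = 2`. -/
theorem stmt5 (k E : Type*) [Field k] [Field E] [Algebra k E] [CharP E 2]
    (ℓ : IntermediateField k E)
    (hℓsq : ∀ x ∈ ℓ, x ^ 2 ∈ (⊥ : IntermediateField k E))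
    (δ : k) (hirr : Irreducible (X ^ 2 + X + C δ : k[X]))
    (γ : E) (hγ : γ ^ 2 + γ = algebraMap k E δ)
    (K L : IntermediateField k E)
    (hK : K = IntermediateField.adjoin k {γ})
    (hL : L = ℓ ⊔ K) (hℓL : ℓ ≤ L) :
    (∀ x ∈ L, x ^ 2 ∈ K) ∧ K ≤ L ∧ Module.finrank k K = 2 ∧
      Module.finrank ℓ (IntermediateField.extendScalars hℓL) = 2 := by
  haveI : CharP k 2 := (algebraMap k E).charP (algebraMap k E).injective 2
  set p : k[X] := X ^ 2 + X + C δ with hp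
  have hpmonic : p.Monic := by rw [hp]; monicity!
  have hpdeg : p.natDegree = 2 := by rw [hp]; compute_degree!
  have haeval : aeval γ p = 0 := by
    rw [hp]
    simp only [map_add, map_pow, aeval_X, aeval_C]
    rw [hγ]
    exact CharTwo.add_self_eq_zero _
  -- no root of p in k
  have hnoroot : ∀ c : k, c ^ 2 + c ≠ δ := by
    intro c hc
    have hroot : p.IsRoot c := by
      simp only [IsRoot, hp, eval_add, eval_pow, eval_X, eval_C, hc]
      exact CharTwo.add_self_eq_zero _
    obtain ⟨q, hq⟩ := dvd_iff_isRoot.mpr hroot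
    rcases hirr.isUnit_or_isUnit hq with h | h
    · exact Polynomial.not_isUnit_X_sub_C c h
    · have hdq : q.natDegree = 0 := natDegree_eq_zero_of_isUnit h
      have := congrArg Polynomial.natDegree hq
      have hq0 : q ≠ 0 := by
        intro h0
        rw [h0, mul_zero] at hq
        exact hirr.ne_zero hq
      rw [hpdeg, natDegree_mul (X_sub_C_ne_zero c) hq0, natDegree_X_sub_C, hdq] at this
      omega
  have hint : IsIntegral k γ := ⟨p, hpmonic, haeval⟩
  -- finrank k K = 2
  have hminpoly : minpoly k γ = p := (minpoly.eq_of_irreducible_of_monic hirr haeval hpmonic).symm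
  have hfinK : Module.finrank k K = 2 := by
    rw [hK]
    have := IntermediateField.adjoin.finrank hint
    rw [hminpoly, hpdeg] at this
    exact this
  -- γ not in image of k
  have hγk : γ ∉ Set.range (algebraMap k E) := by
    rintro ⟨c, hc⟩
    apply hnoroot c
    apply (algebraMap k E).injective
    rw [map_add, map_pow, hc, hγ]
  -- γ not in ℓ
  have hγℓ : γ ∉ ℓ := by
    intro hγmem
    have hsq := hℓsq γ hγmem
    rw [IntermediateField.mem_bot] at hsq
    obtain ⟨a, ha⟩ := hsq
    apply hγk
    refine ⟨a + δ, ?_⟩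
    rw [map_add, ha]
    have : γ ^ 2 + (γ ^ 2 + γ) = γ := by
      rw [← add_assoc, CharTwo.add_self_eq_zero, zero_add]
    rw [hγ] at this
    exact this
  -- minpoly of γ over ℓ has degree 2
  have haevalℓ : aeval γ (p.map (algebraMap k ℓ)) = 0 := by
    rw [aeval_map_algebraMap]
    exact haeval
  have hintℓ : IsIntegral ℓ γ := ⟨p.map (algebraMap k ℓ), hpmonic.map _, haevalℓ⟩
  have hγℓ' : γ ∉ Set.range (algebraMap ℓ E) := by
    rintro ⟨c, hc⟩
    exact hγℓ (hc ▸ c.2)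
  have hmindegℓ : (minpoly ℓ γ).natDegree = 2 := by
    have hle : (minpoly ℓ γ).natDegree ≤ 2 := by
      have := Polynomial.natDegree_le_of_dvd (minpoly.dvd ℓ γ haevalℓ)
        ((hpmonic.map (algebraMap k ℓ)).ne_zero)
      rwa [Monic.natDegree_map hpmonic (algebraMap k ℓ), hpdeg] at this
    have hge : 2 ≤ (minpoly ℓ γ).natDegree := by
      rw [minpoly.two_le_natDegree_iff hintℓ]
      rintro ⟨c, hc⟩
      exact hγℓ' ⟨c, hc⟩
    omega
  -- extendScalars = adjoin ℓ {γ}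
  have hext : IntermediateField.extendScalars hℓL = IntermediateField.adjoin ℓ {γ} := by
    apply IntermediateField.restrictScalars_injective k
    rw [IntermediateField.extendScalars_restrictScalars,
      IntermediateField.restrictScalars_adjoin_eq_sup, hL, hK]
  have hfinL : Module.finrank ℓ (IntermediateField.extendScalars hℓL) = 2 := by
    rw [hext]
    have := IntermediateField.adjoin.finrank hintℓ
    rw [hmindegℓ] at this
    exact this
  -- the squaring part
  refine ⟨?_, hL ▸ le_sup_right, hfinK, hfinL⟩
  haveI : Fact (Nat.Prime 2) := ⟨Nat.prime_two⟩
  let M : IntermediateField k E :=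
    { K.toSubfield.comap (frobenius E 2) with
      algebraMap_mem' := fun a => by
        show algebraMap k E a ∈ K.toSubfield.comap (frobenius E 2)
        simp only [Subfield.mem_comap, frobenius_def]
        rw [← map_pow]
        exact K.algebraMap_mem (a ^ 2) }
  have hLM : L ≤ M := by
    rw [hL]
    apply sup_le
    · intro x hx
      show x ∈ K.toSubfield.comap (frobenius E 2)
      simp only [Subfield.mem_comap, frobenius_def]
      exact (bot_le : (⊥ : IntermediateField k E) ≤ K) (hℓsq x hx)
    · intro x hx
      show x ∈ K.toSubfield.comap (frobenius E 2)
      simp only [Subfield.mem_comap, frobenius_def]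
      exact pow_mem hx 2
  intro x hx
  have := hLM hx
  simpa [M, Subfield.mem_comap, frobenius_def] using this
end

section
/- Let U = { (a, b) ∈ L⁴ × (L × K³) : N(a) + tr(b₁) = 0 }, with operation (a,b) + (c,d) = (a + c, (b₁ + d₁ + g(a,c), b₂ + d₂, b₃ + d₃, b₄ + d₄)). Then U is a group with identity (0,0), in which the inverse of (a, b) is (a, (b₁ + g(a,a), b₂, b₃, b₄)). -/
/-- Elements of the (mixed) octonion algebra, written as quadruples over `L`. -/
abbrev Oct (L : Type*) := L × L × L × L

variable {L : Type*} [Field L]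

/-- The mixed octonion multiplication on `L⁴`, relative to an automorphism `σ` of `L`
(of order 2) and constants `α`, `β`. -/
def omul (σ : L → L) (α β : L) : Oct L → Oct L → Oct L
  | (x1, x2, x3, x4), (y1, y2, y3, y4) =>
    (x1 * y1 + α * σ x2 * y2 + β * σ x3 * y3 + α * β * σ x4 * y4,
     x2 * y1 + σ x1 * y2 + β * x4 * σ y3 + β * σ x3 * y4,
     x3 * y1 + σ x1 * y3 + α * x4 * σ y2 + α * σ x2 * y4,
     x3 * y2 + x2 * y3 + x4 * σ y1 + x1 * y4)

/-- The octonion conjugation `x̄ = (x̄₁, x₂, x₃, x₄)`. -/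
def oconj (σ : L → L) : Oct L → Oct L
  | (x1, x2, x3, x4) => (σ x1, x2, x3, x4)

/-- The mixed octonion norm `N(x) = x₁x̄₁ + αx₂x̄₂ + βx₃x̄₃ + αβx₄x̄₄`. -/
def onorm (σ : L → L) (α β : L) : Oct L → L
  | (x1, x2, x3, x4) => x1 * σ x1 + α * (x2 * σ x2) + β * (x3 * σ x3) + α * β * (x4 * σ x4)

/-- Componentwise scalar multiplication on `L⁴`. -/
def osmul (t : L) : Oct L → Oct L
  | (x1, x2, x3, x4) => (t * x1, t * x2, t * x3, t * x4)

/-- The sesquilinear form `g(a,c) = ā₁c₁ + αā₂c₂ + βā₃c₃ + αβā₄c₄`. -/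
def gform (σ : L → L) (α β : L) : Oct L → Oct L → L
  | (a1, a2, a3, a4), (c1, c2, c3, c4) =>
    σ a1 * c1 + α * (σ a2 * c2) + β * (σ a3 * c3) + α * β * (σ a4 * c4)

/-- The map `f(a) = (N(a), a₁a₂ + βā₃a₄, a₁a₃ + αā₂a₄, a₂a₃ + ā₁a₄)`. -/
def fmap (σ : L → L) (α β : L) : Oct L → Oct L
  | (a1, a2, a3, a4) =>
    (onorm σ α β (a1, a2, a3, a4),
     a1 * a2 + β * σ a3 * a4, a1 * a3 + α * σ a2 * a4, a2 * a3 + σ a1 * a4)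

/-- The octonion inverse `x⁻¹ = N(x)⁻¹ x̄` (for `N(x) ≠ 0`). -/
noncomputable def oinv (σ : L → L) (α β : L) (x : Oct L) : Oct L :=
  osmul (onorm σ α β x)⁻¹ (oconj σ x)

/-- Membership in the group `U = {(a,b) ∈ L⁴ × (L × K³) : N(a) + tr(b₁) = 0}`. -/
def memU {L : Type*} [Field L] (σ : L → L) (α β : L) (K : Subfield L)
    (p : Oct L × Oct L) : Prop :=
  onorm σ α β p.1 + (p.2.1 + σ p.2.1) = 0 ∧
    p.2.2.1 ∈ K ∧ p.2.2.2.1 ∈ K ∧ p.2.2.2.2 ∈ K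

/-- The group operation `(a,b) + (c,d) = (a + c, (b₁ + d₁ + g(a,c), b₂+d₂, b₃+d₃, b₄+d₄))`. -/
def mopU {L : Type*} [Field L] (σ : L → L) (α β : L) (p q : Oct L × Oct L) :
    Oct L × Oct L :=
  (p.1 + q.1, p.2 + q.2 + (gform σ α β p.1 q.1, 0, 0, 0))

/-- The candidate inverse `(a, b) ↦ (a, (b₁ + g(a,a), b₂, b₃, b₄))`. -/
def minvU {L : Type*} [Field L] (σ : L → L) (α β : L) (p : Oct L × Oct L) :
    Oct L × Oct L :=
  (p.1, p.2 + (gform σ α β p.1 p.1, 0, 0, 0))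

/-- `U = {(a, b) ∈ L⁴ × (L × K³) : N(a) + tr(b₁) = 0}` with the operation
`(a,b) + (c,d) = (a + c, (b₁ + d₁ + g(a,c), b₂+d₂, b₃+d₃, b₄+d₄))` is a group
with identity `(0,0)`, in which the inverse of `(a,b)` is `(a, (b₁ + g(a,a), b₂, b₃, b₄))`. -/
theorem stmt13 {L : Type*} [Field L] [CharP L 2] (σ : L ≃+* L)
    (hσ : ∀ x, σ (σ x) = x) (K : Subfield L)
    (hK2 : ∀ x : L, x ^ 2 ∈ K) (hKσ : ∀ x ∈ K, σ x ∈ K)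
    (α β : L) (hα : σ α = α) (hβ : σ β = β) (hαK : α ∈ K) (hβK : β ∈ K)
    (hα0 : α ≠ 0) (hβ0 : β ≠ 0) :
    (∀ p q, memU σ α β K p → memU σ α β K q → memU σ α β K (mopU σ α β p q)) ∧
      (∀ p q r : Oct L × Oct L,
        mopU σ α β (mopU σ α β p q) r = mopU σ α β p (mopU σ α β q r)) ∧
      memU σ α β K 0 ∧
      (∀ p, memU σ α β K p → mopU σ α β p 0 = p ∧ mopU σ α β 0 p = p) ∧
      (∀ p, memU σ α β K p → memU σ α β K (minvU σ α β p) ∧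
        mopU σ α β p (minvU σ α β p) = 0 ∧ mopU σ α β (minvU σ α β p) p = 0) := by
  have h2 : (2:L) = 0 := CharTwo.two_eq_zero
  refine ⟨?_, ?_, ?_, ?_, ?_⟩
  · rintro ⟨⟨a1,a2,a3,a4⟩, b1, b2, b3, b4⟩ ⟨⟨c1,c2,c3,c4⟩, d1, d2, d3, d4⟩
      ⟨hp, hp2, hp3, hp4⟩ ⟨hq, hq2, hq3, hq4⟩
    have hb2 : b2 ∈ K := hp2
    have hb3 : b3 ∈ K := hp3
    have hb4 : b4 ∈ K := hp4
    have hd2 : d2 ∈ K := hq2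
    have hd3 : d3 ∈ K := hq3
    have hd4 : d4 ∈ K := hq4
    simp only [memU, mopU, onorm, gform] at hp hq ⊢
    simp only [Prod.mk_add_mk, map_add, map_mul, hσ, hα, hβ]
    simp only [add_zero]
    refine ⟨?_, add_mem hb2 hd2, add_mem hb3 hd3, add_mem hb4 hd4⟩
    linear_combination hp + hq + (a1*σ c1 + σ a1*c1 + α*(a2*σ c2 + σ a2*c2)
      + β*(a3*σ c3 + σ a3*c3) + α*β*(a4*σ c4 + σ a4*c4)) * h2
  · rintro ⟨⟨a1,a2,a3,a4⟩, b1, b2, b3, b4⟩ ⟨⟨c1,c2,c3,c4⟩, d1, d2, d3, d4⟩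
      ⟨⟨e1,e2,e3,e4⟩, f1, f2, f3, f4⟩
    simp only [mopU, gform, Prod.mk_add_mk, Prod.mk.injEq, map_add, map_mul, hσ, hα, hβ]
    refine ⟨⟨by ring, by ring, by ring, by ring⟩, by ring, by ring, by ring, by ring⟩
  · refine ⟨?_, K.zero_mem, K.zero_mem, K.zero_mem⟩
    simp [onorm]
  · rintro ⟨⟨a1,a2,a3,a4⟩, b1, b2, b3, b4⟩ _
    constructor <;>
    · simp only [mopU, gform, Prod.ext_iff, Prod.fst_zero, Prod.snd_zero,
        Prod.mk_add_mk, Prod.fst_add, Prod.snd_add]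
      norm_num
  · rintro ⟨⟨a1,a2,a3,a4⟩, b1, b2, b3, b4⟩ ⟨hp, hp2, hp3, hp4⟩
    simp only [memU, onorm] at hp
    have hb2 : b2 ∈ K := hp2
    have hb3 : b3 ∈ K := hp3
    have hb4 : b4 ∈ K := hp4
    refine ⟨?_, ?_, ?_⟩
    · simp only [memU, minvU, onorm, gform, Prod.mk_add_mk, map_add, map_mul, hσ, hα, hβ,
        add_zero]
      refine ⟨?_, hb2, hb3, hb4⟩
      linear_combination hp + (a1*σ a1 + α*(a2*σ a2) + β*(a3*σ a3) + α*β*(a4*σ a4)) * h2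
    all_goals
      simp only [mopU, minvU, gform, Prod.mk_add_mk, Prod.ext_iff, Prod.fst_zero,
        Prod.snd_zero, Prod.fst_add, Prod.snd_add, map_add, map_mul, hσ, hα, hβ]
      refine ⟨⟨?_,?_,?_,?_⟩, ?_,?_,?_,?_⟩ <;> (ring_nf; simp [h2])
end

section
/- Suppose the mixed quadratic form q(y₁, y₂, y₃, y₄) = y₁² + αy₂ȳ₂ + βy₃ȳ₃ + αβy₄ȳ₄ (with y₁ ∈ ℓ, y₂, y₃, y₄ ∈ K) is anisotropic. If z ∈ L and z₁, z₂, z₃, a₁, a₂, a₃ ∈ K satisfy z² + z₁a₁ + z₂a₂ + z₃a₃ = 0 and αz₁z̄₁ + α⁻¹a₁ā₁ + βz₂z̄₂ + β⁻¹a₂ā₂ + αβz₃z̄₃ + α⁻¹β⁻¹a₃ā₃ = 0, then z = 0, and zᵢ = aᵢ = 0 for all i. -/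
/-- Suppose the mixed quadratic form `q(y₁,y₂,y₃,y₄) = y₁² + αy₂ȳ₂ + βy₃ȳ₃ + αβy₄ȳ₄`
(with `y₁ ∈ ℓ` the fixed field of the conjugation, and `y₂, y₃, y₄ ∈ K`) is anisotropic.
If `z ∈ L` and `z₁, z₂, z₃, a₁, a₂, a₃ ∈ K` satisfy `z² + z₁a₁ + z₂a₂ + z₃a₃ = 0` and
`αz₁z̄₁ + α⁻¹a₁ā₁ + βz₂z̄₂ + β⁻¹a₂ā₂ + αβz₃z̄₃ + α⁻¹β⁻¹a₃ā₃ = 0`, then `z = 0` and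
`zᵢ = aᵢ = 0` for all `i`. -/
theorem stmt17 {L : Type*} [Field L] [CharP L 2] (σ : L ≃+* L)
    (hσ : ∀ x, σ (σ x) = x) (K : Subfield L)
    (hK2 : ∀ x : L, x ^ 2 ∈ K) (hKσ : ∀ x ∈ K, σ x ∈ K)
    (α β : L) (hα : σ α = α) (hβ : σ β = β) (hαK : α ∈ K) (hβK : β ∈ K)
    (hα0 : α ≠ 0) (hβ0 : β ≠ 0)
    (haniso : ∀ y1 y2 y3 y4 : L, σ y1 = y1 → y2 ∈ K → y3 ∈ K → y4 ∈ K →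
      y1 ^ 2 + α * (y2 * σ y2) + β * (y3 * σ y3) + α * β * (y4 * σ y4) = 0 →
      y1 = 0 ∧ y2 = 0 ∧ y3 = 0 ∧ y4 = 0)
    (z z1 z2 z3 a1 a2 a3 : L)
    (hz1 : z1 ∈ K) (hz2 : z2 ∈ K) (hz3 : z3 ∈ K)
    (ha1 : a1 ∈ K) (ha2 : a2 ∈ K) (ha3 : a3 ∈ K)
    (heq1 : z ^ 2 + z1 * a1 + z2 * a2 + z3 * a3 = 0)
    (heq2 : α * (z1 * σ z1) + α⁻¹ * (a1 * σ a1) + β * (z2 * σ z2) + β⁻¹ * (a2 * σ a2)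
      + α * β * (z3 * σ z3) + α⁻¹ * β⁻¹ * (a3 * σ a3) = 0) :
    z = 0 ∧ z1 = 0 ∧ z2 = 0 ∧ z3 = 0 ∧ a1 = 0 ∧ a2 = 0 ∧ a3 = 0 := by

  have h2 : (2:L) = 0 := by
    have := CharP.cast_eq_zero L 2; simpa using this
  -- conjugate of heq1
  have heq1' : (σ z) ^ 2 + σ z1 * σ a1 + σ z2 * σ a2 + σ z3 * σ a3 = 0 := by
    have := congrArg σ heq1
    simpa [map_add, map_mul, map_pow] using this
  have hainv : σ α⁻¹ = α⁻¹ := by rw [map_inv₀, hα]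
  have hbinv : σ β⁻¹ = β⁻¹ := by rw [map_inv₀, hβ]
  set y1 := z + σ z with hy1
  set y2 := z1 + α⁻¹ * σ a1 with hy2
  set y3 := z2 + β⁻¹ * σ a2 with hy3
  set y4 := z3 + α⁻¹ * β⁻¹ * σ a3 with hy4
  have hσy2 : σ y2 = σ z1 + α⁻¹ * a1 := by
    simp [hy2, map_add, map_mul, hainv, hσ]
  have hσy3 : σ y3 = σ z2 + β⁻¹ * a2 := by
    simp [hy3, map_add, map_mul, hbinv, hσ]
  have hσy4 : σ y4 = σ z3 + α⁻¹ * β⁻¹ * a3 := by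
    simp [hy4, map_add, map_mul, hainv, hbinv, hσ]
  have hσy1 : σ y1 = y1 := by
    simp [hy1, map_add, hσ, add_comm]
  have haK : α⁻¹ ∈ K := K.inv_mem hαK
  have hbK : β⁻¹ ∈ K := K.inv_mem hβK
  have hy2K : y2 ∈ K := K.add_mem hz1 (K.mul_mem haK (hKσ _ ha1))
  have hy3K : y3 ∈ K := K.add_mem hz2 (K.mul_mem hbK (hKσ _ ha2))
  have hy4K : y4 ∈ K := K.add_mem hz3 (K.mul_mem (K.mul_mem haK hbK) (hKσ _ ha3))
  have hA : α * α⁻¹ = 1 := mul_inv_cancel₀ hα0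
  have hB : β * β⁻¹ = 1 := mul_inv_cancel₀ hβ0
  have hkey : y1 ^ 2 + α * (y2 * σ y2) + β * (y3 * σ y3) + α * β * (y4 * σ y4) = 0 := by
    rw [hσy2, hσy3, hσy4, hy1, hy2, hy3, hy4]
    linear_combination heq1 + heq1' + heq2 + (z * σ z) * h2
      + (z1 * a1 + σ a1 * σ z1 + α⁻¹ * (a1 * σ a1)
          + (z3 * a3 + σ a3 * σ z3 + α⁻¹ * β⁻¹ * (a3 * σ a3)) * (β * β⁻¹)) * hA
      + (z2 * a2 + σ a2 * σ z2 + β⁻¹ * (a2 * σ a2)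
          + z3 * a3 + σ a3 * σ z3 + α⁻¹ * β⁻¹ * (a3 * σ a3)) * hB
  obtain ⟨hy1z, hy2z, hy3z, hy4z⟩ := haniso y1 y2 y3 y4 hσy1 hy2K hy3K hy4K hkey
  -- from y1 = 0: σ z = z
  have hzσ : σ z = z := by linear_combination hy1z - z * h2
  -- from y2 = 0 etc: a_i in terms of z_i
  have ha1e : a1 = α * σ z1 := by
    have h : σ a1 = α * z1 := by
      have : α⁻¹ * σ a1 = -z1 := by linear_combination hy2z
      field_simp at this
      linear_combination this - (z1 * α) * h2
    have := congrArg σ h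
    rw [hσ, map_mul, hα] at this
    exact this
  have ha2e : a2 = β * σ z2 := by
    have h : σ a2 = β * z2 := by
      have : β⁻¹ * σ a2 = -z2 := by linear_combination hy3z
      field_simp at this
      linear_combination this - (z2 * β) * h2
    have := congrArg σ h
    rw [hσ, map_mul, hβ] at this
    exact this
  have ha3e : a3 = α * β * σ z3 := by
    have h : σ a3 = α * β * z3 := by
      have : α⁻¹ * β⁻¹ * σ a3 = -z3 := by linear_combination hy4z
      field_simp at this
      linear_combination this - (z3 * α * β) * h2
    have := congrArg σ h
    rw [hσ, map_mul, map_mul, hα, hβ] at this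
    exact this
  have hfin : z ^ 2 + α * (z1 * σ z1) + β * (z2 * σ z2) + α * β * (z3 * σ z3) = 0 := by
    linear_combination heq1 - z1 * ha1e - z2 * ha2e - z3 * ha3e
  obtain ⟨hz0, hz10, hz20, hz30⟩ := haniso z z1 z2 z3 hzσ hz1 hz2 hz3 hfin
  refine ⟨hz0, hz10, hz20, hz30, ?_, ?_, ?_⟩
  · simp [ha1e, hz10]
  · simp [ha2e, hz20]
  · simp [ha3e, hz30]
end
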